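/- arXiv:2603.26414 — 7 statements merged into one kernel-verified Lean document; each statement's English description precedes it below -/
import Mathlib

section
/- Let P be an irreducible stochastic matrix with stationary distribution π and fundamental matrix Z = (I - P + 1π)^{-1}. Then Z is a generalized inverse of I - P, i.e., (I - P) Z (I - P) = I - P. -/
open Matrix BigOperators

/-- The fundamental matrix `Z = (I - P + 1π)⁻¹` is a generalized inverse of
`I - P`: `(I - P) Z (I - P) = I - P`. -/
theorem stmt_1 {n : ℕ} (P Z : Matrix (Fin n) (Fin n) ℝ) (pv : Fin n → ℝ)
    (hP0 : ∀ i j, 0 ≤ P i j) (hProw : ∀ i, ∑ j, P i j = 1)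
    (hirr : ∀ i j, ∃ k : ℕ, 0 < (P ^ k) i j)
    (hpiP : Matrix.vecMul pv P = pv) (hpi1 : ∑ i, pv i = 1) (hpipos : ∀ i, 0 < pv i)
    (hZl : (1 - P + Matrix.of (fun _ j => pv j)) * Z = 1)
    (hZr : Z * (1 - P + Matrix.of (fun _ j => pv j)) = 1) :
    (1 - P) * Z * (1 - P) = 1 - P := by
  set E : Matrix (Fin n) (Fin n) ℝ := Matrix.of (fun _ j => pv j) with hE
  have hPE : P * E = E := by
    ext i j
    simp only [Matrix.mul_apply, hE, Matrix.of_apply]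
    rw [← Finset.sum_mul, hProw, one_mul]
  have hEP : E * P = E := by
    ext i j
    have := congrFun hpiP j
    simpa [Matrix.vecMul, Matrix.mul_apply, hE, dotProduct] using this
  have hEE : E * E = E := by
    ext i j
    simp only [Matrix.mul_apply, hE, Matrix.of_apply]
    rw [← Finset.sum_mul, hpi1, one_mul]
  have hEA : E * (1 - P + E) = E := by
    rw [mul_add, mul_sub, mul_one, hEP, hEE, sub_self, zero_add]
  have hEZ : E * Z = E := by
    calc E * Z = (E * (1 - P + E)) * Z := by rw [hEA]
    _ = E * ((1 - P + E) * Z) := by rw [mul_assoc]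
    _ = E := by rw [hZl, mul_one]
  have h1 : (1 - P) * Z = 1 - E := by
    have : (1 - P + E) * Z = (1 - P) * Z + E * Z := by rw [add_mul]
    rw [hZl, hEZ] at this
    rw [eq_comm, sub_eq_iff_eq_add, eq_comm]
    exact this.symm
  rw [h1, sub_mul, one_mul, mul_sub, mul_one, hEP, sub_self, sub_zero]
end

section
/- Let P be an irreducible stochastic matrix on states {1,...,n} with stationary distribution π, and let M(i,j) denote the mean weighted first passage time from i to j with mean weight matrix W (i.e., M satisfies M = -P[M]_dg + (P∘W)11^T + PM where ∘ is the entrywise product). Then the diagonal satisfies M(i,i) = (π(P∘W)1)/π(i) for every state i. -/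
/-! Since `π (1 - P) = 0`, multiplying the recursion on the left by `π` annihilates `(1 - P) M`,
and `π P [M]_dg = π [M]_dg`; what remains is `π (P ∘ W) 1 = π(i) M(i,i)` for each `i`. -/

open Matrix BigOperators

section StationaryDiagonal

variable {R ι : Type*} [CommRing R] [Fintype ι]

theorem vecMul_eq_mul_of_one_sub_mul_eq [DecidableEq ι] {P M A : Matrix ι ι R} {π d : ι → R}
    (hπ : π ᵥ* P = π) (hM : (1 - P) * M = A - P * diagonal d) :
    π ᵥ* A = π * d := by
  have h := congrArg (π ᵥ* ·) hM
  simp only [← vecMul_vecMul, vecMul_sub, vecMul_one, hπ, sub_self, zero_vecMul] at h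
  funext i
  simpa [vecMul_diagonal, sub_eq_zero, eq_comm] using congrFun h i

theorem vecMul_mul_of_one_apply (v : ι → R) (A : Matrix ι ι R) (j : ι) :
    (v ᵥ* (A * of fun _ _ => (1 : R))) j = ∑ a, ∑ k, v a * A a k := by
  simp [vecMul, dotProduct, mul_apply, Finset.mul_sum]

end StationaryDiagonal

theorem stmt_4_general {n : ℕ} (P W M : Matrix (Fin n) (Fin n) ℝ) (pv : Fin n → ℝ)
    (hpiP : Matrix.vecMul pv P = pv) (hpipos : ∀ i, 0 < pv i)
    (hM : (1 - P) * M =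
        Matrix.hadamard P W * Matrix.of (fun _ _ => (1 : ℝ)) -
          P * Matrix.diagonal (fun i => M i i)) :
    ∀ i, M i i = (∑ a, ∑ k, pv a * (P a k * W a k)) / pv i := by
  intro i
  have h := congrFun (vecMul_eq_mul_of_one_sub_mul_eq hpiP hM) i
  rw [vecMul_mul_of_one_apply] at h
  simp only [hadamard_apply, Pi.mul_apply] at h
  rw [h, mul_div_cancel_left₀ _ (hpipos i).ne']

/-- If `M` satisfies the mean weighted first-passage-time recursion
`(I - P) M = (P ∘ W) 1 1ᵀ - P [M]_dg`, then the diagonal satisfies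
`M(i,i) = (π (P∘W) 1) / π(i)` for every state `i`. -/
theorem stmt_4 {n : ℕ} (P W M : Matrix (Fin n) (Fin n) ℝ) (pv : Fin n → ℝ)
    (hP0 : ∀ i j, 0 ≤ P i j) (hProw : ∀ i, ∑ j, P i j = 1)
    (hirr : ∀ i j, ∃ k : ℕ, 0 < (P ^ k) i j)
    (hpiP : Matrix.vecMul pv P = pv) (hpi1 : ∑ i, pv i = 1) (hpipos : ∀ i, 0 < pv i)
    (hM : (1 - P) * M =
        Matrix.hadamard P W * Matrix.of (fun _ _ => (1 : ℝ)) -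
          P * Matrix.diagonal (fun i => M i i)) :
    ∀ i, M i i = (∑ a, ∑ k, pv a * (P a k * W a k)) / pv i :=
  stmt_4_general P W M pv hpiP hpipos hM
end

section
/- Let P be an irreducible stochastic matrix with stationary distribution π, fundamental matrix Z = (I - P + 1π)^{-1}, Π = 1π, and Ξ = diag(π). Let W be a mean weight matrix and define M = (Z(P∘W)Π - 11^T[Z(P∘W)Π]_dg + (π(P∘W)1)(I - Z + 11^T[Z]_dg)) Ξ^{-1}. Then M satisfies the first-passage recursion (I - P)M = -P[M]_dg + (P∘W)11^T. -/
open Matrix BigOperators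

/-- The closed-form matrix
`M = (Z(P∘W)Π - 11ᵀ[Z(P∘W)Π]_dg + (π(P∘W)1)(I - Z + 11ᵀ[Z]_dg)) Ξ⁻¹`
satisfies the first-passage recursion `(I - P) M = -P [M]_dg + (P∘W) 1 1ᵀ`. -/
theorem stmt_5 {n : ℕ} (P Z W M : Matrix (Fin n) (Fin n) ℝ) (pv : Fin n → ℝ)
    (hP0 : ∀ i j, 0 ≤ P i j) (hProw : ∀ i, ∑ j, P i j = 1)
    (hirr : ∀ i j, ∃ k : ℕ, 0 < (P ^ k) i j)
    (hpiP : Matrix.vecMul pv P = pv) (hpi1 : ∑ i, pv i = 1) (hpipos : ∀ i, 0 < pv i)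
    (hZl : (1 - P + Matrix.of (fun _ j => pv j)) * Z = 1)
    (hZr : Z * (1 - P + Matrix.of (fun _ j => pv j)) = 1)
    (A : Matrix (Fin n) (Fin n) ℝ)
    (hA : A = Z * Matrix.hadamard P W * Matrix.of (fun _ j => pv j))
    (hM : M =
        (A - Matrix.of (fun _ _ => (1 : ℝ)) * Matrix.diagonal (fun i => A i i) +
            (∑ a, ∑ b, pv a * (P a b * W a b)) •
              (1 - Z +
                Matrix.of (fun _ _ => (1 : ℝ)) * Matrix.diagonal (fun i => Z i i))) *
          Matrix.diagonal (fun i => (pv i)⁻¹)) :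
    (1 - P) * M =
      -(P * Matrix.diagonal (fun i => M i i)) +
        Matrix.hadamard P W * Matrix.of (fun _ _ => (1 : ℝ)) := by
  set Pi : Matrix (Fin n) (Fin n) ℝ := Matrix.of (fun _ j => pv j) with hPiDef
  set J : Matrix (Fin n) (Fin n) ℝ := Matrix.of (fun _ _ => (1 : ℝ)) with hJDef
  set F : Matrix (Fin n) (Fin n) ℝ := Matrix.hadamard P W with hFDef
  set c : ℝ := ∑ a, ∑ b, pv a * (P a b * W a b) with hcDef
  set Xi : Matrix (Fin n) (Fin n) ℝ := Matrix.diagonal (fun i => (pv i)⁻¹) with hXiDef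
  have hpne : ∀ j, pv j ≠ 0 := fun j => (hpipos j).ne'
  have L2 : P * J = J := by
    ext i j
    simp [Matrix.mul_apply, hJDef, hProw]
  have hPZ : (1 - P) * Z = 1 - Pi := by
    have hPiZ : Pi * Z = Pi := by
      have h1 : Matrix.vecMul pv (1 - P + Pi) = pv := by
        have h0 : Matrix.vecMul pv Pi = pv := by
          ext j
          simp [Matrix.vecMul, dotProduct, hPiDef, ← Finset.sum_mul, hpi1]
        simp [Matrix.vecMul_add, Matrix.vecMul_sub, Matrix.vecMul_one, hpiP, h0]
      have h2 : Matrix.vecMul pv Z = pv := by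
        calc Matrix.vecMul pv Z
            = Matrix.vecMul (Matrix.vecMul pv (1 - P + Pi)) Z := by rw [h1]
          _ = Matrix.vecMul pv ((1 - P + Pi) * Z) := by rw [Matrix.vecMul_vecMul]
          _ = pv := by rw [hZl, Matrix.vecMul_one]
      ext i j
      have := congrFun h2 j
      simpa [Matrix.mul_apply, Matrix.vecMul, dotProduct, hPiDef] using this
    have h3 : (1 - P) * Z + Pi * Z = 1 := by rw [← Matrix.add_mul, hZl]
    rw [hPiZ] at h3
    linear_combination (norm := noncomm_ring) h3
  have hPJ : (1 - P) * J = 0 := by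
    rw [Matrix.sub_mul, Matrix.one_mul, L2, sub_self]
  have L5 : Pi * (F * Pi) = c • Pi := by
    ext i j
    simp only [Matrix.mul_apply, Matrix.smul_apply, hPiDef, Matrix.of_apply, hFDef,
      Matrix.hadamard_apply, smul_eq_mul]
    rw [hcDef, Finset.sum_mul]
    congr 1
    ext b
    rw [Finset.sum_mul, Finset.mul_sum]
    congr 1
    ext a
    ring
  have hPiXi : Pi * Xi = J := by
    ext i j
    simp [hXiDef, Matrix.mul_diagonal, hPiDef, hJDef, hpne j]
  have hdiagM : Matrix.diagonal (fun i => M i i) = c • Xi := by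
    have hMii : ∀ i, M i i = c * (pv i)⁻¹ := by
      intro i
      rw [hM, hXiDef]
      simp only [Matrix.mul_diagonal, Matrix.add_apply, Matrix.sub_apply,
        Matrix.smul_apply, Matrix.mul_apply, Matrix.diagonal_apply, hJDef,
        Matrix.of_apply, Matrix.one_apply, smul_eq_mul, one_mul, mul_ite, mul_zero,
        Finset.sum_ite_eq', Finset.mem_univ, if_pos, if_true]
      ring
    ext i j
    by_cases h : i = j <;>
      simp [Matrix.diagonal_apply, hXiDef, h, hMii]
  have e1 : (1 - P) * (Z * F * Pi) = F * Pi - c • Pi := by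
    rw [mul_assoc Z F Pi, ← mul_assoc, hPZ, Matrix.sub_mul, Matrix.one_mul, L5]
  have e2 : (1 - P) * (J * Matrix.diagonal (fun i => (Z * F * Pi) i i)) = 0 := by
    rw [← mul_assoc, hPJ, Matrix.zero_mul]
  have e3 : (1 - P) * (1 - Z + J * Matrix.diagonal (fun i => Z i i)) = Pi - P := by
    rw [mul_add, mul_sub, mul_one, hPZ, ← mul_assoc, hPJ, Matrix.zero_mul, add_zero]
    abel
  have keyInner : (1 - P) * (Z * F * Pi - J * Matrix.diagonal (fun i => (Z * F * Pi) i i)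
      + c • (1 - Z + J * Matrix.diagonal (fun i => Z i i))) = F * Pi - c • P := by
    rw [mul_add, mul_sub, e1, e2, Matrix.mul_smul, e3, sub_zero, smul_sub]
    abel
  have key : (1 - P) * M = F * (Pi * Xi) - c • (P * Xi) := by
    rw [hM, hA, ← mul_assoc, keyInner, Matrix.sub_mul, Matrix.smul_mul, mul_assoc]
  rw [key, hPiXi, hdiagM, Matrix.mul_smul]
  abel
end

section
/- The weighted Kemeny constant K(P,W) := Σ_{i,j} π(i) M(i,j) π(j) satisfies the closed form K(P,W) = tr(Z) · π(P∘W)1, where Z is the fundamental matrix. In particular, K(P,W) is linear in the weight matrix W. -/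
open Matrix BigOperators

/-- The weighted Kemeny constant `K(P,W) = Σ_{i,j} π(i) M(i,j) π(j)`
equals `tr(Z) · π(P∘W)1`, where `M` is given by its closed form.  In particular it is
linear in the weight matrix `W`. -/
theorem stmt_8 {n : ℕ} (P Z W M : Matrix (Fin n) (Fin n) ℝ) (pv : Fin n → ℝ)
    (hP0 : ∀ i j, 0 ≤ P i j) (hProw : ∀ i, ∑ j, P i j = 1)
    (hirr : ∀ i j, ∃ k : ℕ, 0 < (P ^ k) i j)
    (hpiP : Matrix.vecMul pv P = pv) (hpi1 : ∑ i, pv i = 1) (hpipos : ∀ i, 0 < pv i)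
    (hZl : (1 - P + Matrix.of (fun _ j => pv j)) * Z = 1)
    (hZr : Z * (1 - P + Matrix.of (fun _ j => pv j)) = 1)
    (A : Matrix (Fin n) (Fin n) ℝ)
    (hA : A = Z * Matrix.hadamard P W * Matrix.of (fun _ j => pv j))
    (hM : M =
        (A - Matrix.of (fun _ _ => (1 : ℝ)) * Matrix.diagonal (fun i => A i i) +
            (∑ a, ∑ b, pv a * (P a b * W a b)) •
              (1 - Z +
                Matrix.of (fun _ _ => (1 : ℝ)) * Matrix.diagonal (fun i => Z i i))) *
          Matrix.diagonal (fun i => (pv i)⁻¹)) :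
    ∑ i, ∑ j, pv i * M i j * pv j =
      Matrix.trace Z * ∑ a, ∑ b, pv a * (P a b * W a b) := by
  have hpv_ne : ∀ j, pv j ≠ 0 := fun j => (hpipos j).ne'
  set c := ∑ a, ∑ b, pv a * (P a b * W a b) with hc
  -- π Π = π
  have hPim : Matrix.vecMul pv (Matrix.of fun _ j => pv j) = pv := by
    funext j
    simp [Matrix.vecMul, dotProduct, ← Finset.sum_mul, hpi1]
  have h1 : Matrix.vecMul pv (1 - P + Matrix.of fun _ j => pv j) = pv := by
    simp [Matrix.vecMul_add, Matrix.vecMul_sub, hpiP, hPim, Matrix.vecMul_one]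
  have hpvZ : Matrix.vecMul pv Z = pv := by
    calc Matrix.vecMul pv Z
        = Matrix.vecMul (Matrix.vecMul pv (1 - P + Matrix.of fun _ j => pv j)) Z := by
          rw [h1]
      _ = Matrix.vecMul pv ((1 - P + Matrix.of fun _ j => pv j) * Z) := by
          rw [Matrix.vecMul_vecMul]
      _ = pv := by rw [hZl, Matrix.vecMul_one]
  have hpvZ' : ∀ j, ∑ i, pv i * Z i j = pv j := fun j => by
    simpa [Matrix.vecMul, dotProduct] using congrFun hpvZ j
  -- row sums of Z * (P ∘ W), weighted by pv
  have hPWc : Matrix.vecMul pv (Z * Matrix.hadamard P W) =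
      Matrix.vecMul pv (Matrix.hadamard P W) := by
    rw [← Matrix.vecMul_vecMul, hpvZ]
  have hrow : ∑ j, ∑ k, pv j * (Z * Matrix.hadamard P W) j k = c := by
    rw [Finset.sum_comm]
    have h : ∀ k, ∑ j, pv j * (Z * Matrix.hadamard P W) j k
        = ∑ a, pv a * (P a k * W a k) := by
      intro k
      have := congrFun hPWc k
      simpa [Matrix.vecMul, dotProduct, Matrix.hadamard_apply] using this
    simp_rw [h]
    rw [Finset.sum_comm]
  have hA' : ∀ i j, A i j = (∑ k, (Z * Matrix.hadamard P W) i k) * pv j := by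
    intro i j
    rw [hA]
    simp [Matrix.mul_apply, Finset.sum_mul]
  have hSA : ∑ i, ∑ j, pv i * A i j = c := by
    simp_rw [hA']
    have : ∀ i, ∑ j, pv i * ((∑ k, (Z * Matrix.hadamard P W) i k) * pv j)
        = ∑ k, pv i * (Z * Matrix.hadamard P W) i k := by
      intro i
      rw [← Finset.mul_sum, ← Finset.mul_sum, hpi1, mul_one, Finset.mul_sum]
    simp_rw [this]
    exact hrow
  have htrA : ∑ j, A j j = c := by
    simp_rw [hA']
    calc ∑ j, (∑ k, (Z * Matrix.hadamard P W) j k) * pv j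
        = ∑ j, ∑ k, pv j * (Z * Matrix.hadamard P W) j k := by
          apply Finset.sum_congr rfl
          intro j _
          rw [Finset.sum_mul]
          exact Finset.sum_congr rfl fun k _ => mul_comm _ _
      _ = c := hrow
  have s2 : ∑ i, ∑ j, pv i * A j j = c := by
    simp_rw [← Finset.mul_sum, htrA, ← Finset.sum_mul, hpi1, one_mul]
  have s3 : ∑ i, ∑ j, pv i * (1 : Matrix (Fin n) (Fin n) ℝ) i j = 1 := by
    simp_rw [Matrix.one_apply, mul_ite, mul_one, mul_zero, Finset.sum_ite_eq,
      Finset.mem_univ, if_true]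
    exact hpi1
  have s4 : ∑ i, ∑ j, pv i * Z i j = 1 := by
    rw [Finset.sum_comm]
    simp_rw [hpvZ']
    exact hpi1
  have s5 : ∑ i, ∑ j, pv i * Z j j = Matrix.trace Z := by
    simp_rw [← Finset.mul_sum, ← Finset.sum_mul, hpi1, one_mul]
    simp [Matrix.trace, Matrix.diag]
  have hJD : ∀ (d : Fin n → ℝ) (i j : Fin n),
      (((Matrix.of fun _ _ => (1 : ℝ)) : Matrix (Fin n) (Fin n) ℝ) * Matrix.diagonal d) i j = d j := by
    intro d i j
    simp [Matrix.mul_apply, Matrix.diagonal_apply]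
  have key : ∑ i, ∑ j, pv i * M i j * pv j
      = ∑ i, ∑ j, (pv i * A i j - pv i * A j j
          + (c * (pv i * (1 : Matrix (Fin n) (Fin n) ℝ) i j)
            - c * (pv i * Z i j) + c * (pv i * Z j j))) := by
    apply Finset.sum_congr rfl
    intro i _
    apply Finset.sum_congr rfl
    intro j _
    rw [hM]
    simp only [Matrix.mul_diagonal, Matrix.sub_apply, Matrix.add_apply,
      Matrix.smul_apply, smul_eq_mul, hJD]
    have hj := hpv_ne j
    field_simp
  rw [key]
  have split : ∑ i, ∑ j, (pv i * A i j - pv i * A j j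
          + (c * (pv i * (1 : Matrix (Fin n) (Fin n) ℝ) i j)
            - c * (pv i * Z i j) + c * (pv i * Z j j)))
      = (∑ i, ∑ j, pv i * A i j) - (∑ i, ∑ j, pv i * A j j)
        + (c * (∑ i, ∑ j, pv i * (1 : Matrix (Fin n) (Fin n) ℝ) i j)
          - c * (∑ i, ∑ j, pv i * Z i j) + c * (∑ i, ∑ j, pv i * Z j j)) := by
    simp only [Finset.sum_add_distrib, Finset.sum_sub_distrib, Finset.mul_sum]
  rw [split, hSA, s2, s3, s4, s5]
  ring
end

section
/- The partial derivative of the mean weighted first passage time matrix M with respect to the weight entry W(l,k) is P(l,k)·[Z e_l 1^T - 11^T [Z e_l 1^T]_dg + π(l)(I - Z + 11^T[Z]_dg)Ξ^{-1}], where e_l is the l-th standard basis vector. -/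
open BigOperators Matrix

/-!
Along the line `W + t • e_l e_kᵀ` the map `W ↦ M(W)` is linear in `W` (the matrices `Z`, `Π`, `Ξ`
do not depend on `W`), so its derivative in the direction `e_l e_kᵀ` is `M(e_l e_kᵀ)`. Since
`P ∘ e_l e_kᵀ = P(l,k) e_l e_kᵀ`, `Π Ξ⁻¹ = 11ᵀ` and `π (P ∘ e_l e_kᵀ) 1 = π(l) P(l,k)`, evaluating `M`
at `e_l e_kᵀ` gives the stated matrix.
-/

namespace Matrix

theorem hadamard_single {m n α : Type*} [DecidableEq m] [DecidableEq n] [MulZeroClass α]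
    (P : Matrix m n α) (i : m) (j : n) (c : α) :
    P ⊙ single i j c = single i j (P i j * c) := by
  ext a b
  by_cases h : i = a ∧ j = b
  · obtain ⟨rfl, rfl⟩ := h
    simp
  · simp [single, h]

variable {ι K : Type*} [Fintype ι] [DecidableEq ι] [Field K]

/-- The mean weighted first passage time matrix `M(W)` with `Π = 1π` and `Ξ = diag(π)`. -/
def weightedMfpt (P Z : Matrix ι ι K) (pv : ι → K) : Matrix ι ι K →ₗ[K] Matrix ι ι K where
  toFun W :=
    let A := Z * P ⊙ W * of (fun _ j => pv j)
    (A - of (fun _ _ => (1 : K)) * diagonal (fun i => A i i) +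
        (∑ a, ∑ b, pv a * (P a b * W a b)) •
          (1 - Z + of (fun _ _ => (1 : K)) * diagonal (fun i => Z i i))) *
      diagonal (fun i => (pv i)⁻¹)
  map_add' W V := by
    simp only [hadamard_add, mul_add, add_mul, sub_mul, add_apply, ← diagonal_add,
      Finset.sum_add_distrib, add_smul]
    abel
  map_smul' c W := by
    have hdiag (A : Matrix ι ι K) :
        diagonal (fun i => (c • A) i i) = c • diagonal fun i => A i i := by
      rw [← diagonal_smul]
      rfl
    have hweight : ∑ a, ∑ b, pv a * (P a b * (c • W) a b) =
        c * ∑ a, ∑ b, pv a * (P a b * W a b) := by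
      simp only [Finset.mul_sum, smul_apply, smul_eq_mul, mul_left_comm c]
    simp only [hadamard_smul, Matrix.mul_smul, Matrix.smul_mul, hdiag, hweight, mul_smul,
      ← smul_sub, ← smul_add, RingHom.id_apply]

theorem weightedMfpt_single_one (P Z : Matrix ι ι K) {pv : ι → K} (hpv : ∀ i, pv i ≠ 0)
    (l k : ι) :
    weightedMfpt P Z pv (single l k 1) =
      P l k • (of (fun a _ => Z a l) - of (fun _ _ => (1 : K)) * diagonal (fun a => Z a l) +
        pv l • ((1 - Z + of (fun _ _ => (1 : K)) * diagonal (fun a => Z a a)) *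
          diagonal (fun a => (pv a)⁻¹))) := by
  have hA : Z * single l k (P l k) * of (fun _ j => pv j) =
      of fun a b => P l k * Z a l * pv b := by
    ext a b
    simp [mul_apply, single, ite_and, mul_comm]
  have hweight : ∑ a, ∑ b, pv a * (P a b * single l k 1 a b) = pv l * P l k := by
    simp [single, ite_and]
  ext i j
  simp only [weightedMfpt, LinearMap.coe_mk, AddHom.coe_mk, hadamard_single, mul_one, hweight,
    hA, mul_diagonal, add_apply, sub_apply, smul_apply, of_apply, smul_eq_mul]
  field_simp [hpv j]

end Matrix

theorem LinearMap.hasDerivAt_apply_add_smul_apply {𝕜 E m n : Type*} [NontriviallyNormedField 𝕜]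
    [AddCommGroup E] [Module 𝕜 E] (f : E →ₗ[𝕜] Matrix m n 𝕜) (x v : E) (i : m) (j : n)
    (t : 𝕜) :
    HasDerivAt (fun s : 𝕜 => f (x + s • v) i j) (f v i j) t := by
  simp only [map_add, map_smul]
  exact (hasDerivAt_mul_const _).const_add _

theorem stmt_12_general {n : ℕ} (P Z : Matrix (Fin n) (Fin n) ℝ) (pv : Fin n → ℝ)
    (hpipos : ∀ i, 0 < pv i)
    (Mfun : Matrix (Fin n) (Fin n) ℝ → Matrix (Fin n) (Fin n) ℝ)
    (hMfun : ∀ W A, A = Z * Matrix.hadamard P W * Matrix.of (fun _ j => pv j) →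
        Mfun W =
          (A - Matrix.of (fun _ _ => (1 : ℝ)) * Matrix.diagonal (fun i => A i i) +
              (∑ a, ∑ b, pv a * (P a b * W a b)) •
                (1 - Z +
                  Matrix.of (fun _ _ => (1 : ℝ)) * Matrix.diagonal (fun i => Z i i))) *
            Matrix.diagonal (fun i => (pv i)⁻¹)) :
    ∀ (W : Matrix (Fin n) (Fin n) ℝ) (l k i j : Fin n),
      HasDerivAt (fun t : ℝ => Mfun (W + t • Matrix.single l k (1 : ℝ)) i j)
        ((P l k •
            (Matrix.of (fun a _ => Z a l) -
              Matrix.of (fun _ _ => (1 : ℝ)) * Matrix.diagonal (fun a => Z a l) +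
              pv l •
                ((1 - Z +
                    Matrix.of (fun _ _ => (1 : ℝ)) * Matrix.diagonal (fun a => Z a a)) *
                  Matrix.diagonal (fun a => (pv a)⁻¹))) :
            Matrix (Fin n) (Fin n) ℝ) i j)
        0 := by
  intro W l k i j
  have hM : Mfun = Matrix.weightedMfpt P Z pv := funext fun W => hMfun W _ rfl
  rw [hM, ← Matrix.weightedMfpt_single_one P Z (fun a => (hpipos a).ne') l k]
  exact (Matrix.weightedMfpt P Z pv).hasDerivAt_apply_add_smul_apply W _ i j 0

/-- The partial derivative of the closed-form mean weighted first-passage-time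
matrix `M(W)` with respect to the entry `W(l,k)` is
`P(l,k) [Z e_l 1ᵀ - 11ᵀ[Z e_l 1ᵀ]_dg + π(l)(I - Z + 11ᵀ[Z]_dg) Ξ⁻¹]`, stated entrywise as a
directional derivative along the basis matrix `e_l e_kᵀ`. -/
theorem stmt_12 {n : ℕ} (P Z : Matrix (Fin n) (Fin n) ℝ) (pv : Fin n → ℝ)
    (hP0 : ∀ i j, 0 ≤ P i j) (hProw : ∀ i, ∑ j, P i j = 1)
    (hirr : ∀ i j, ∃ k : ℕ, 0 < (P ^ k) i j)
    (hpiP : Matrix.vecMul pv P = pv) (hpi1 : ∑ i, pv i = 1) (hpipos : ∀ i, 0 < pv i)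
    (hZl : (1 - P + Matrix.of (fun _ j => pv j)) * Z = 1)
    (hZr : Z * (1 - P + Matrix.of (fun _ j => pv j)) = 1)
    (Mfun : Matrix (Fin n) (Fin n) ℝ → Matrix (Fin n) (Fin n) ℝ)
    (hMfun : ∀ W A, A = Z * Matrix.hadamard P W * Matrix.of (fun _ j => pv j) →
        Mfun W =
          (A - Matrix.of (fun _ _ => (1 : ℝ)) * Matrix.diagonal (fun i => A i i) +
              (∑ a, ∑ b, pv a * (P a b * W a b)) •
                (1 - Z +
                  Matrix.of (fun _ _ => (1 : ℝ)) * Matrix.diagonal (fun i => Z i i))) *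
            Matrix.diagonal (fun i => (pv i)⁻¹)) :
    ∀ (W : Matrix (Fin n) (Fin n) ℝ) (l k i j : Fin n),
      HasDerivAt (fun t : ℝ => Mfun (W + t • Matrix.single l k (1 : ℝ)) i j)
        ((P l k •
            (Matrix.of (fun a _ => Z a l) -
              Matrix.of (fun _ _ => (1 : ℝ)) * Matrix.diagonal (fun a => Z a l) +
              pv l •
                ((1 - Z +
                    Matrix.of (fun _ _ => (1 : ℝ)) * Matrix.diagonal (fun a => Z a a)) *
                  Matrix.diagonal (fun a => (pv a)⁻¹))) :
            Matrix (Fin n) (Fin n) ℝ) i j)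
        0 :=
  stmt_12_general P Z pv hpipos Mfun hMfun
end

section
/- Let P be an irreducible stochastic matrix with stationary distribution π and fundamental matrix Z. For any matrix-valued perturbation direction Q with Q1 = 0 (a feasible tangent direction of the stochastic simplex), the directional derivative of the stationary distribution π(P) in direction Q equals πQZ. That is, if P(t) = P + tQ remains an irreducible stochastic matrix for small t with stationary distribution π(t), then dπ(t)/dt at t=0 equals πQZ. -/
/-!
Differentiating `π(t) (P + tQ) = π(t)` at `t = 0` gives `π' = π' P + π Q`, and differentiating
`π(t) 1 = 1` gives `π' 1 = 0`. Together they say `π' (I - P + 1π) = π Q`, and `Z` inverts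
`I - P + 1π`.
-/

open BigOperators Matrix Filter Topology

namespace Matrix

variable {ι κ R 𝕜 : Type*} [Fintype ι]

theorem vecMul_of_const_rows [CommSemiring R] (d : ι → R) (p : κ → R) :
    d ᵥ* Matrix.of (fun (_ : ι) j => p j) = (∑ i, d i) • p := by
  funext j
  simp only [vecMul, dotProduct, of_apply, Pi.smul_apply, smul_eq_mul, Finset.sum_mul]

theorem vecMul_one_sub_add_of_const_rows [CommRing R] [DecidableEq ι] {P : Matrix ι ι R}
    {d v p : ι → R} (hd : d ᵥ* P + v = d) (hsum : ∑ i, d i = 0) :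
    d ᵥ* (1 - P + Matrix.of (fun _ j => p j)) = v := by
  rw [vecMul_add, vecMul_sub, vecMul_one, vecMul_of_const_rows, hsum, zero_smul, add_zero]
  nth_rewrite 1 [← hd]
  abel

variable [NontriviallyNormedField 𝕜]

theorem _root_.HasDerivAt.vecMul_const {π : 𝕜 → ι → 𝕜} {d : ι → 𝕜} {x : 𝕜}
    (h : HasDerivAt π d x) (M : Matrix ι κ 𝕜) :
    HasDerivAt (fun t => π t ᵥ* M) (d ᵥ* M) x :=
  hasDerivAt_pi.mpr fun j =>
    HasDerivAt.fun_sum fun i _ => (hasDerivAt_pi.mp h i).mul_const (M i j)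

theorem _root_.HasDerivAt.sum_apply_eq_zero_of_eventually_const {π : 𝕜 → ι → 𝕜}
    {d : ι → 𝕜} {x c : 𝕜} (h : HasDerivAt π d x) (hc : ∀ᶠ t in 𝓝 x, ∑ i, π t i = c) :
    ∑ i, d i = 0 := by
  have hsum : HasDerivAt (fun t => ∑ i, π t i) (∑ i, d i) x :=
    HasDerivAt.fun_sum fun i _ => hasDerivAt_pi.mp h i
  exact (hsum.congr_of_eventuallyEq (hc.mono fun _ ht => ht.symm)).unique (hasDerivAt_const x c)

theorem vecMul_add_eq_of_hasDerivAt_stationary {P Q : Matrix ι ι 𝕜} {π : 𝕜 → ι → 𝕜}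
    {d : ι → 𝕜} (h : HasDerivAt π d 0)
    (hstat : ∀ᶠ t in 𝓝 0, π t ᵥ* (P + t • Q) = π t) :
    d ᵥ* P + π 0 ᵥ* Q = d := by
  have hprod : HasDerivAt (fun t => π t ᵥ* (P + t • Q)) (d ᵥ* P + π 0 ᵥ* Q) 0 := by
    simp_rw [vecMul_add, vecMul_smul]
    simpa using (h.vecMul_const P).fun_add ((hasDerivAt_id (0 : 𝕜)).fun_smul (h.vecMul_const Q))
  exact (hprod.congr_of_eventuallyEq (hstat.mono fun _ ht => ht.symm)).unique h

end Matrix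

theorem stmt_16_general {n : ℕ} (P Z Q : Matrix (Fin n) (Fin n) ℝ) (pv : Fin n → ℝ)
    (hZl : (1 - P + Matrix.of (fun _ j => pv j)) * Z = 1)
    (ε : ℝ) (hε : 0 < ε)
    (πt : ℝ → Fin n → ℝ)
    (hstat : ∀ t : ℝ, |t| < ε → Matrix.vecMul (πt t) (P + t • Q) = πt t)
    (hnorm : ∀ t : ℝ, |t| < ε → ∑ i, πt t i = 1)
    (hzero : πt 0 = pv)
    (d : Fin n → ℝ)
    (hderiv : ∀ i, HasDerivAt (fun t => πt t i) (d i) 0) :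
    d = Matrix.vecMul (Matrix.vecMul pv Q) Z := by
  have hsmall : ∀ᶠ t : ℝ in 𝓝 0, |t| < ε := by
    simpa using eventually_abs_sub_lt (0 : ℝ) hε
  have hπ : HasDerivAt πt d 0 := hasDerivAt_pi.mpr hderiv
  have hlin : d ᵥ* P + pv ᵥ* Q = d :=
    hzero ▸ vecMul_add_eq_of_hasDerivAt_stationary hπ (hsmall.mono hstat)
  have hsum : ∑ i, d i = 0 := hπ.sum_apply_eq_zero_of_eventually_const (hsmall.mono hnorm)
  calc d = d ᵥ* ((1 - P + Matrix.of (fun _ j => pv j)) * Z) := by rw [hZl, vecMul_one]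
    _ = (pv ᵥ* Q) ᵥ* Z := by rw [← vecMul_vecMul, vecMul_one_sub_add_of_const_rows hlin hsum]

/-- For a feasible perturbation direction `Q` (with `Q1 = 0`), if
`π(t)` is the stationary distribution of `P + tQ` for small `t`, smooth at `t = 0` with
`π(0) = π`, then the derivative of `π(t)` at `t = 0` equals `π Q Z`. -/
theorem stmt_16 {n : ℕ} (P Z Q : Matrix (Fin n) (Fin n) ℝ) (pv : Fin n → ℝ)
    (hP0 : ∀ i j, 0 ≤ P i j) (hProw : ∀ i, ∑ j, P i j = 1)
    (hirr : ∀ i j, ∃ k : ℕ, 0 < (P ^ k) i j)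
    (hpiP : Matrix.vecMul pv P = pv) (hpi1 : ∑ i, pv i = 1) (hpipos : ∀ i, 0 < pv i)
    (hZl : (1 - P + Matrix.of (fun _ j => pv j)) * Z = 1)
    (hZr : Z * (1 - P + Matrix.of (fun _ j => pv j)) = 1)
    (hQ : Q.mulVec (fun _ => (1 : ℝ)) = 0)
    (ε : ℝ) (hε : 0 < ε)
    (πt : ℝ → Fin n → ℝ)
    (hstat : ∀ t : ℝ, |t| < ε → Matrix.vecMul (πt t) (P + t • Q) = πt t)
    (hnorm : ∀ t : ℝ, |t| < ε → ∑ i, πt t i = 1)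
    (hzero : πt 0 = pv)
    (d : Fin n → ℝ)
    (hderiv : ∀ i, HasDerivAt (fun t => πt t i) (d i) 0) :
    d = Matrix.vecMul (Matrix.vecMul pv Q) Z :=
  stmt_16_general P Z Q pv hZl ε hε πt hstat hnorm hzero d hderiv
end

section
/- Let P be an irreducible stochastic matrix with stationary distribution π, let W and W^{(2)} be the entrywise first and second moment matrices of the weights, and let M be the mean weighted first passage time matrix. Then the diagonal of the second-moment matrix M^{(2)} satisfies π(i)·M^{(2)}(i,i) = π(P∘W^{(2)})1 + (2π(P∘W)(M - [M]_dg))(i), where M^{(2)} is the unique solution of the recursion (I-P)M^{(2)} = (P∘W^{(2)})11^T - P[M^{(2)}]_dg + 2(P∘W)(M - [M]_dg). -/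
open BigOperators Matrix

/-- If `M` is the mean weighted first-passage-time matrix and `M⁽²⁾` solves
`(I-P)M⁽²⁾ = (P∘W⁽²⁾)11ᵀ - P[M⁽²⁾]_dg + 2(P∘W)(M - [M]_dg)`, then the diagonal satisfies
`π(i)·M⁽²⁾(i,i) = π(P∘W⁽²⁾)1 + (2π(P∘W)(M - [M]_dg))(i)`. -/
theorem stmt_19 {n : ℕ} (P W W2 M M2 : Matrix (Fin n) (Fin n) ℝ) (pv : Fin n → ℝ)
    (hP0 : ∀ i j, 0 ≤ P i j) (hProw : ∀ i, ∑ j, P i j = 1)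
    (hirr : ∀ i j, ∃ k : ℕ, 0 < (P ^ k) i j)
    (hpiP : Matrix.vecMul pv P = pv) (hpi1 : ∑ i, pv i = 1) (hpipos : ∀ i, 0 < pv i)
    (hM : (1 - P) * M =
        -(P * Matrix.diagonal (fun i => M i i)) +
          Matrix.hadamard P W * Matrix.of (fun _ _ => (1 : ℝ)))
    (hMdg : ∀ i, M i i = (∑ a, ∑ b, pv a * (P a b * W a b)) / pv i)
    (hM2 : (1 - P) * M2 =
        Matrix.hadamard P W2 * Matrix.of (fun _ _ => (1 : ℝ)) -
          P * Matrix.diagonal (fun i => M2 i i) +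
          (2 : ℝ) • (Matrix.hadamard P W * (M - Matrix.diagonal (fun i => M i i)))) :
    ∀ i, pv i * M2 i i =
      (∑ a, ∑ b, pv a * (P a b * W2 a b)) +
        2 * Matrix.vecMul pv (Matrix.hadamard P W * (M - Matrix.diagonal (fun a => M a a))) i := by
  intro i
  have h := congrArg (fun A => Matrix.vecMul pv A i) hM2
  simp only [Matrix.sub_mul, Matrix.one_mul, Matrix.vecMul_sub, Matrix.vecMul_add,
    Matrix.smul_vecMul, ← Matrix.vecMul_vecMul, hpiP, sub_self, Pi.add_apply, Pi.sub_apply,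
    Pi.smul_apply, Pi.zero_apply, smul_eq_mul, Matrix.vecMul_diagonal] at h
  have h0 : (Matrix.vecMul (Matrix.vecMul pv (Matrix.hadamard P W2))
      (Matrix.of (fun _ _ => (1:ℝ)))) i = ∑ a, ∑ b, pv a * (P a b * W2 a b) := by
    simp [Matrix.vecMul, dotProduct, Matrix.hadamard, Finset.mul_sum]
    exact Finset.sum_comm
  have h1 : (Matrix.vecMul pv ((2:ℝ) • (Matrix.hadamard P W * (M - Matrix.diagonal (fun a => M a a))))) i
      = 2 * Matrix.vecMul pv (Matrix.hadamard P W * (M - Matrix.diagonal (fun a => M a a))) i := by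
    simp only [Matrix.vecMul, dotProduct, Matrix.smul_apply, smul_eq_mul, Finset.mul_sum]
    exact Finset.sum_congr rfl fun x _ => by ring
  rw [h0, h1] at h
  linarith
end
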